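/- arXiv:2104.01749 — 2 statements merged into one kernel-verified Lean document; each statement's English description precedes it below -/
import Mathlib

section
/- Let A be an n × n integer matrix with det A > 0. Then the maximum of det B(A, x, y, z) over all x, y ∈ {0, 1}ⁿ and z ∈ {0, 1} equals the maximum of det B(A, x, y, 1) over all x, y ∈ {0, 1}ⁿ; that is, when extending A to an (n+1) × (n+1) matrix of maximal determinant with 0-1 border entries, one may always take the corner entry to be 1. -/
/-!
Expanding along the last row, `det B(A, x, y, z) = det B(A, x, y, 0) + z · det A`. Since
`det A > 0`, raising the corner from `0` to `1` never lowers the determinant, so every value of the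
first family is dominated by a value of the second, which is a subfamily of the first; such
families have the same greatest element.
-/

open Matrix

/-- The bordered matrix `B(A, x, y, z)`: upper-left `n × n` block `A`, first `n` entries of the
last column given by `y`, first `n` entries of the last row given by `x`, corner entry `z`. -/
def border {n : ℕ} (A : Matrix (Fin n) (Fin n) ℤ) (x y : Fin n → ℤ) (z : ℤ) :
    Matrix (Fin (n + 1)) (Fin (n + 1)) ℤ :=
  Matrix.of fun i j =>
    if hi : (i : ℕ) < n then
      if hj : (j : ℕ) < n then A ⟨i, hi⟩ ⟨j, hj⟩ else y ⟨i, hi⟩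
    else
      if hj : (j : ℕ) < n then x ⟨j, hj⟩ else z

theorem isGreatest_iff_of_subset_of_forall_exists_le {α : Type*} [PartialOrder α] {s t : Set α}
    (hts : t ⊆ s) (hle : ∀ a ∈ s, ∃ b ∈ t, a ≤ b) {m : α} :
    IsGreatest s m ↔ IsGreatest t m := by
  constructor
  · rintro ⟨hms, hm⟩
    obtain ⟨b, hbt, hmb⟩ := hle m hms
    obtain rfl : m = b := le_antisymm hmb (hm (hts hbt))
    exact ⟨hbt, upperBounds_mono_set hts hm⟩
  · rintro ⟨hmt, hm⟩
    refine ⟨hts hmt, fun a has => ?_⟩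
    obtain ⟨b, hbt, hab⟩ := hle a has
    exact hab.trans (hm hbt)

namespace Matrix

variable {R : Type*} [CommRing R] {n : ℕ}

theorem det_updateRow_last_single (M : Matrix (Fin (n + 1)) (Fin (n + 1)) R) (c : R) :
    (M.updateRow (Fin.last n) (Pi.single (Fin.last n) c)).det =
      c * (M.submatrix Fin.castSucc Fin.castSucc).det := by
  rw [det_succ_row _ (Fin.last n), Fintype.sum_eq_single (Fin.last n)]
  · rw [submatrix_updateRow_succAbove]
    simp [← two_mul]
  · intro j hj
    simp [Pi.single_eq_of_ne hj]

theorem det_add_single_last_last (M : Matrix (Fin (n + 1)) (Fin (n + 1)) R) (c : R) :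
    (M + single (Fin.last n) (Fin.last n) c).det =
      M.det + c * (M.submatrix Fin.castSucc Fin.castSucc).det := by
  have hrow : M + single (Fin.last n) (Fin.last n) c =
      M.updateRow (Fin.last n) (M (Fin.last n) + Pi.single (Fin.last n) c) := by
    ext i j
    by_cases hi : i = Fin.last n <;> by_cases hj : j = Fin.last n <;>
      simp [hi, hj, updateRow_apply, Ne.symm]
  rw [hrow, det_updateRow_add, updateRow_eq_self, det_updateRow_last_single]

end Matrix

section Border

variable {n : ℕ} (A : Matrix (Fin n) (Fin n) ℤ) (x y : Fin n → ℤ)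

theorem border_eq_add_single (z : ℤ) :
    border A x y z = border A x y 0 + single (Fin.last n) (Fin.last n) z := by
  ext i j
  induction i using Fin.lastCases <;> induction j using Fin.lastCases <;>
    simp [border, (Fin.castSucc_ne_last _).symm]

theorem border_submatrix_castSucc (z : ℤ) :
    (border A x y z).submatrix Fin.castSucc Fin.castSucc = A := by
  ext i j
  simp [border]

theorem det_border (z : ℤ) : (border A x y z).det = (border A x y 0).det + z * A.det := by
  rw [border_eq_add_single, det_add_single_last_last, border_submatrix_castSucc]

end Border

/-- For `det A > 0`, the maximum of `det B(A, x, y, z)` over `x, y ∈ {0, 1}ⁿ`, `z ∈ {0, 1}`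
equals the maximum of `det B(A, x, y, 1)` over `x, y ∈ {0, 1}ⁿ`. -/
theorem border_max_corner_one {n : ℕ} (A : Matrix (Fin n) (Fin n) ℤ) (hA : 0 < A.det)
    (m : ℤ) :
    IsGreatest {d : ℤ | ∃ (x y : Fin n → ℤ) (z : ℤ),
        (∀ i, x i = 0 ∨ x i = 1) ∧ (∀ i, y i = 0 ∨ y i = 1) ∧ (z = 0 ∨ z = 1) ∧
        d = (border A x y z).det} m ↔
    IsGreatest {d : ℤ | ∃ x y : Fin n → ℤ,
        (∀ i, x i = 0 ∨ x i = 1) ∧ (∀ i, y i = 0 ∨ y i = 1) ∧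
        d = (border A x y 1).det} m := by
  apply isGreatest_iff_of_subset_of_forall_exists_le
  · rintro d ⟨x, y, hx, hy, rfl⟩
    exact ⟨x, y, 1, hx, hy, Or.inr rfl, rfl⟩
  · rintro d ⟨x, y, z, hx, hy, hz, rfl⟩
    refine ⟨_, ⟨x, y, hx, hy, rfl⟩, ?_⟩
    rcases hz with rfl | rfl
    · rw [det_border A x y 1]
      linarith
    · rfl
end

section
/- The maximum of det B(A₃, x, y, 1) over all vectors x, y ∈ {0, 1}³, where A₃ is the upper-left 3 × 3 submatrix of A₁₅, equals 3, and this maximum is attained by the bordering that yields A₄ (the upper-left 4 × 4 submatrix of A₁₅). -/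
/-!
With corner entry `1`, the Schur complement gives `det B(A, x, y, 1) = det (A - y xᵀ)`, and for
`A₃` the matrix determinant lemma turns this into `2 - xᵀ adj(A₃) y`. Here `adj(A₃) = J - 2P` with
`J` the all-ones matrix and `P` a permutation matrix, so for `0/1` vectors
`xᵀ adj(A₃) y ≥ |x| |y| - 2 min(|x|, |y|) ≥ -1`, whence the bound `3`, which the bordering
producing `A₄` attains.
-/

open Matrix

/-- The matrix `A₁₅` from the paper. -/
def A15 : Matrix (Fin 15) (Fin 15) ℤ :=
  !![1, 0, 1, 1, 0, 0, 0, 0, 0, 0, 1, 0, 0, 1, 1;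
      1, 1, 0, 0, 0, 1, 0, 1, 1, 1, 1, 0, 0, 0, 0;
      0, 1, 1, 0, 1, 0, 0, 1, 0, 0, 1, 1, 0, 1, 0;
      0, 1, 0, 1, 1, 1, 0, 0, 0, 0, 0, 0, 1, 0, 1;
      1, 0, 0, 0, 1, 1, 1, 1, 0, 0, 0, 0, 0, 1, 0;
      0, 0, 1, 0, 0, 1, 1, 0, 1, 0, 0, 0, 1, 1, 0;
      0, 1, 0, 1, 0, 0, 1, 1, 0, 0, 1, 0, 1, 1, 0;
      0, 0, 1, 1, 0, 1, 0, 1, 0, 1, 0, 1, 1, 0, 0;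
      0, 0, 0, 1, 1, 0, 0, 1, 1, 1, 0, 0, 0, 1, 1;
      1, 1, 1, 0, 1, 0, 1, 0, 0, 1, 0, 0, 1, 0, 0;
      0, 0, 0, 0, 1, 1, 1, 0, 0, 1, 1, 1, 0, 0, 1;
      1, 1, 0, 1, 0, 0, 1, 0, 1, 0, 0, 1, 0, 0, 0;
      1, 0, 0, 0, 1, 0, 0, 1, 1, 0, 1, 1, 1, 0, 1;
      1, 1, 0, 0, 0, 1, 0, 0, 0, 1, 0, 1, 1, 1, 1;
      0, 1, 1, 0, 0, 0, 1, 1, 0, 0, 0, 0, 0, 0, 1]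

/-- `Asub k h` is the upper-left `k × k` submatrix `A_k` of `A₁₅`. -/
def Asub (k : ℕ) (h : k ≤ 15) : Matrix (Fin k) (Fin k) ℤ :=
  A15.submatrix (Fin.castLE h) (Fin.castLE h)

theorem det_border_one {n : ℕ} (A : Matrix (Fin n) (Fin n) ℤ) (x y : Fin n → ℤ) :
    (border A x y 1).det = (A - vecMulVec y x).det := by
  have hblocks : border A x y 1 = reindex finSumFinEquiv finSumFinEquiv
      (fromBlocks A (replicateCol (Fin 1) y) (replicateRow (Fin 1) x) 1) := by
    ext i j
    refine Fin.lastCases ?_ (fun i => ?_) i <;> refine Fin.lastCases ?_ (fun j => ?_) j <;>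
      simp [border]
  rw [vecMulVec_eq (Fin 1), hblocks, det_reindex_self, det_fromBlocks_one₂₂]
  rfl -- the sides differ only in the `Fintype (Fin 1)` instance

/-- The matrix here is `adj(A₃)`, and `2 = det A₃`. -/
theorem det_border_Asub_three (x y : Fin 3 → ℤ) :
    (border (Asub 3 (by norm_num)) x y 1).det =
      2 - x ⬝ᵥ (!![1, 1, -1; -1, 1, 1; 1, -1, 1] *ᵥ y) := by
  rw [det_border_one, det_fin_three]
  simp only [Asub, A15, Matrix.sub_apply, submatrix_apply, of_apply, cons_val', cons_val_zero,
    cons_val_one, cons_val, cons_val_fin_one, vecMulVec_apply, Fin.castLE_zero, Fin.reduceCastLE,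
    dotProduct, mulVec, Fin.sum_univ_three]
  ring

theorem neg_one_le_dotProduct_mulVec (x y : Fin 3 → ℤ) (hx : ∀ i, x i ∈ Set.Icc 0 1)
    (hy : ∀ i, y i ∈ Set.Icc 0 1) :
    -1 ≤ x ⬝ᵥ (!![1, 1, -1; -1, 1, 1; 1, -1, 1] *ᵥ y) := by
  obtain ⟨hx₀, hx₀'⟩ := hx 0
  obtain ⟨hx₁, hx₁'⟩ := hx 1
  obtain ⟨hx₂, hx₂'⟩ := hx 2
  obtain ⟨hy₀, hy₀'⟩ := hy 0
  obtain ⟨hy₁, hy₁'⟩ := hy 1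
  obtain ⟨hy₂, hy₂'⟩ := hy 2
  simp only [dotProduct, mulVec, Fin.sum_univ_three, of_apply, cons_val', cons_val_fin_one,
    cons_val_zero, cons_val_one, cons_val]
  nlinarith [mul_nonneg hx₀ hy₀, mul_nonneg hx₁ hy₁, mul_nonneg hx₂ hy₂,
    mul_nonneg (sub_nonneg.2 hx₀') (sub_nonneg.2 hy₂'),
    mul_nonneg (sub_nonneg.2 hx₁') (sub_nonneg.2 hy₀'),
    mul_nonneg (sub_nonneg.2 hx₂') (sub_nonneg.2 hy₁')]

/-- The maximum of `det B(A_3, x, y, 1)` over `x, y ∈ {0, 1}^3` equals `3`, and it is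
attained by the bordering of `A_3` that yields `A_4`. -/
theorem border_max_3 :
    IsGreatest {d : ℤ | ∃ x y : Fin 3 → ℤ,
        (∀ i, x i = 0 ∨ x i = 1) ∧ (∀ i, y i = 0 ∨ y i = 1) ∧
        d = (border (Asub 3 (by norm_num)) x y 1).det} 3 ∧
    border (Asub 3 (by norm_num))
        (fun j => A15 ⟨3, by norm_num⟩ (Fin.castLE (by norm_num) j))
        (fun i => A15 (Fin.castLE (by norm_num) i) ⟨3, by norm_num⟩) 1
      = Asub 4 (by norm_num) ∧
    (Asub 4 (by norm_num)).det = 3 := by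
  have hA4 : border (Asub 3 (by norm_num))
        (fun j => A15 ⟨3, by norm_num⟩ (Fin.castLE (by norm_num) j))
        (fun i => A15 (Fin.castLE (by norm_num) i) ⟨3, by norm_num⟩) 1
      = Asub 4 (by norm_num) := by
    ext i j
    fin_cases i <;> fin_cases j <;> rfl
  have hdet : (Asub 4 (by norm_num)).det = 3 := by
    rw [← hA4, det_border_Asub_three]
    decide
  refine ⟨⟨⟨_, _, ?_, ?_, by rw [hA4, hdet]⟩, ?_⟩, hA4, hdet⟩
  · decide
  · decide
  · rintro d ⟨x, y, hx, hy, rfl⟩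
    have mem_Icc {v : Fin 3 → ℤ} (hv : ∀ i, v i = 0 ∨ v i = 1) (i) : v i ∈ Set.Icc 0 1 := by
      rcases hv i with h | h <;> simp [h]
    rw [det_border_Asub_three]
    linarith [neg_one_le_dotProduct_mulVec x y (mem_Icc hx) (mem_Icc hy)]
end
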